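/- Let ψ₁ be a Schwartz function on ℝ with 0 ≤ ψ₁ ≤ 1 and support a compact subset of (0,1), and let ψ(y) = ψ₁(y) − ψ₁(−y). For the sign function sgn, define V_ψ sgn(ξ,t) = ∫_ℝ sgn(y) e^{−2πi y t} ψ(y−ξ) dy. Then for every r > 1 there is a finite constant C (depending only on ψ₁ and r) such that sup_{ξ∈ℝ} (∫_ℝ |V_ψ sgn(ξ,t)|^r dt)^{1/r} ≤ C. -/

import Mathlib

open MeasureTheory Complex
open scoped ENNReal NNReal

noncomputable section

/-- `e2pi a = e^{2πi a}`. -/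
def e2pi (a : ℝ) : ℂ := Complex.exp (2 * Real.pi * Complex.I * (a : ℂ))

/-- Short-time Fourier transform on `ℝ`: `V_φ f (t, ν)`. -/
def STFT1 (φ f : ℝ → ℂ) (t ν : ℝ) : ℂ := ∫ y : ℝ, f y * e2pi (-(y * ν)) * φ (y - t)

/-- The Gaussian window `e^{-x²}` on `ℝ`. -/
def gauss1 : ℝ → ℂ := fun x => (Real.exp (-x ^ 2) : ℝ)

/-- `L^p`-type norm (`ℝ≥0∞`-valued) with essential supremum in case `p = ∞`. -/
def eNorm {α : Type*} [MeasurableSpace α] (μ : Measure α) (p : ℝ≥0∞) (F : α → ℝ≥0∞) : ℝ≥0∞ :=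
  if p = ∞ then essSup F μ else (∫⁻ a, F a ^ p.toReal ∂μ) ^ (1 / p.toReal)

/-- Modulation space norm `‖f‖_{M^{p,q}}` on `ℝ` with the Gaussian window. -/
def modNorm1 (p q : ℝ≥0∞) (f : ℝ → ℂ) : ℝ≥0∞ :=
  eNorm volume q fun ν => eNorm volume p fun t => (‖STFT1 gauss1 f t ν‖₊ : ℝ≥0∞)

/-- Fourier transform on `ℝ`. -/
def FT1 (f : ℝ → ℂ) (ξ : ℝ) : ℂ := ∫ y : ℝ, f y * e2pi (-(y * ξ))

/-- Symbol short-time Fourier transform of a symbol on `ℝ³`. -/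
def symbSTFT3 (Ψ σ : ℝ × ℝ × ℝ → ℂ) (x t₁ t₂ ξ₁ ξ₂ ν : ℝ) : ℂ :=
  ∫ X : ℝ × ℝ × ℝ, σ X * Ψ (X.1 - x, X.2.1 - ξ₁, X.2.2 - ξ₂) *
    e2pi (-(X.1 * ν - t₁ * X.2.1 - t₂ * X.2.2))

/-- Symbol short-time Fourier transform of a symbol on `ℝ⁴`. -/
def symbSTFT4 (Ψ σ : ℝ × ℝ × ℝ × ℝ → ℂ) (x t₁ t₂ t₃ ξ₁ ξ₂ ξ₃ ν : ℝ) : ℂ :=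
  ∫ X : ℝ × ℝ × ℝ × ℝ, σ X * Ψ (X.1 - x, X.2.1 - ξ₁, X.2.2.1 - ξ₂, X.2.2.2 - ξ₃) *
    e2pi (-(X.1 * ν - t₁ * X.2.1 - t₂ * X.2.2.1 - t₃ * X.2.2.2))

/-- The bilinear Hilbert transform as an (absolutely convergent) bilinear Fourier
multiplier for Schwartz functions. -/
def BH (f g : ℝ → ℂ) (x : ℝ) : ℂ :=
  ∫ ξ : ℝ × ℝ, (-(Real.pi : ℂ) * Complex.I * (Real.sign (ξ.1 - ξ.2) : ℝ)) *
    FT1 f ξ.1 * FT1 g ξ.2 * e2pi (x * (ξ.1 + ξ.2))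

/-- The trilinear Hilbert transform as an (absolutely convergent) trilinear Fourier
multiplier for Schwartz functions. -/
def TH (f g h : ℝ → ℂ) (x : ℝ) : ℂ :=
  ∫ ξ : ℝ × ℝ × ℝ, ((Real.pi : ℂ) * Complex.I * (Real.sign (ξ.1 - ξ.2.1 - 2 * ξ.2.2) : ℝ)) *
    FT1 f ξ.1 * FT1 g ξ.2.1 * FT1 h ξ.2.2 * e2pi (x * (ξ.1 + ξ.2.1 + ξ.2.2))

/-- `V_ψ sgn (ξ, t) = ∫ sgn(y) e^{−2πi y t} ψ(y−ξ) dy`. -/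
def Vsgn (ψ : ℝ → ℂ) (ξ t : ℝ) : ℂ :=
  ∫ y : ℝ, ((Real.sign y : ℝ) : ℂ) * e2pi (-(y * t)) * ψ (y - ξ)

/-! Splitting at the jump of `sgn`, `V_ψ sgn (ξ, t)` is the difference of two half-line Fourier
integrals of the `C¹`, compactly supported window `ψ(· - ξ)`. Each is trivially bounded by
`‖ψ‖₁`, and integrating by parts against `e^{-2πi y t}` bounds it by `(|ψ(-ξ)| + ‖ψ'‖₁) / (2π|t|)`.
Hence `|V_ψ sgn (ξ, t)| ≲ (1 + |t|)⁻¹` uniformly in `ξ`, and this is in `L^r` for `r > 1`. -/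

open Set

lemma norm_e2pi (a : ℝ) : ‖e2pi a‖ = 1 := by
  rw [e2pi, show 2 * (Real.pi : ℂ) * I * a = ((2 * Real.pi * a : ℝ) : ℂ) * I by push_cast; ring]
  exact norm_exp_ofReal_mul_I _

lemma contDiff_e2pi_mul (s : ℝ) : ContDiff ℝ 1 fun y : ℝ => e2pi (y * s) :=
  contDiff_exp.comp (contDiff_const.mul (ofRealCLM.contDiff.comp (contDiff_id.mul contDiff_const)))

lemma hasDerivAt_e2pi_mul (s y : ℝ) :
    HasDerivAt (fun y : ℝ => e2pi (y * s)) (2 * Real.pi * I * s * e2pi (y * s)) y := by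
  have h := ((hasDerivAt_id (y : ℂ)).mul_const (s : ℂ)).const_mul (2 * Real.pi * I : ℂ)
    |>.cexp |>.comp_ofReal
  simp only [e2pi, id] at h ⊢
  push_cast
  convert h using 1; ring

lemma Real.measurable_sign : Measurable Real.sign :=
  Measurable.ite measurableSet_Iio measurable_const
    (Measurable.ite measurableSet_Ioi measurable_const measurable_const)

lemma Real.abs_sign_le_one (y : ℝ) : |Real.sign y| ≤ 1 := by
  rcases Real.sign_apply_eq y with h | h | h <;> simp [h]

section HalfLine

variable {f : ℝ → ℂ}

lemma norm_two_pi_mul_I_mul (s : ℝ) : ‖(2 * Real.pi * I * s : ℂ)‖ = 2 * Real.pi * |s| := by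
  simp [abs_of_pos Real.pi_pos]

lemma norm_mul_setIntegral_e2pi_mul_le (hf : ContDiff ℝ 1 f) (hfc : HasCompactSupport f)
    (S : Set ℝ) (s : ℝ) :
    2 * Real.pi * |s| * ‖∫ y in S, e2pi (y * s) * f y‖ ≤
      ‖∫ y in S, deriv (fun y => e2pi (y * s) * f y) y‖ + ∫ y, ‖deriv f y‖ := by
  have hderiv : deriv (fun y => e2pi (y * s) * f y) =
      fun y => 2 * Real.pi * I * s * (e2pi (y * s) * f y) + e2pi (y * s) * deriv f y := by
    funext y
    have := (hasDerivAt_e2pi_mul s y).mul (hf.differentiable one_ne_zero y).hasDerivAt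
    exact this.deriv.trans (by ring)
  have hmod : Integrable fun y => e2pi (y * s) * f y :=
    ((contDiff_e2pi_mul s).continuous.mul hf.continuous).integrable_of_hasCompactSupport
      hfc.mul_left
  have hmod' : Integrable fun y => e2pi (y * s) * deriv f y :=
    ((contDiff_e2pi_mul s).continuous.mul
      (hf.continuous_deriv le_rfl)).integrable_of_hasCompactSupport hfc.deriv.mul_left
  have hderiv_norm : Integrable fun y => ‖deriv f y‖ :=
    (hf.continuous_deriv le_rfl).norm.integrable_of_hasCompactSupport hfc.deriv.norm
  have hparts : 2 * Real.pi * I * s * ∫ y in S, e2pi (y * s) * f y =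
      (∫ y in S, deriv (fun y => e2pi (y * s) * f y) y) - ∫ y in S, e2pi (y * s) * deriv f y := by
    rw [hderiv, integral_add (hmod.const_mul _).integrableOn hmod'.integrableOn,
      integral_const_mul]
    ring
  calc 2 * Real.pi * |s| * ‖∫ y in S, e2pi (y * s) * f y‖
      = ‖(∫ y in S, deriv (fun y => e2pi (y * s) * f y) y) -
          ∫ y in S, e2pi (y * s) * deriv f y‖ := by
        rw [← hparts, norm_mul, norm_two_pi_mul_I_mul]
    _ ≤ ‖∫ y in S, deriv (fun y => e2pi (y * s) * f y) y‖ + ∫ y in S, ‖deriv f y‖ := by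
        refine (norm_sub_le _ _).trans ?_
        gcongr
        refine norm_integral_le_of_norm_le hderiv_norm.integrableOn (.of_forall fun y => ?_)
        rw [norm_mul, norm_e2pi, one_mul]
    _ ≤ _ := add_le_add le_rfl
        (setIntegral_le_integral hderiv_norm (.of_forall fun _ => norm_nonneg _))

lemma norm_mul_integral_Ioi_e2pi_mul_le (hf : ContDiff ℝ 1 f) (hfc : HasCompactSupport f)
    (b s : ℝ) :
    2 * Real.pi * |s| * ‖∫ y in Ioi b, e2pi (y * s) * f y‖ ≤ ‖f b‖ + ∫ y, ‖deriv f y‖ := by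
  simpa [HasCompactSupport.integral_Ioi_deriv_eq (f := fun y => e2pi (y * s) * f y)
      ((contDiff_e2pi_mul s).mul hf) hfc.mul_left, norm_e2pi]
    using norm_mul_setIntegral_e2pi_mul_le hf hfc (Ioi b) s

lemma norm_mul_integral_Iic_e2pi_mul_le (hf : ContDiff ℝ 1 f) (hfc : HasCompactSupport f)
    (b s : ℝ) :
    2 * Real.pi * |s| * ‖∫ y in Iic b, e2pi (y * s) * f y‖ ≤ ‖f b‖ + ∫ y, ‖deriv f y‖ := by
  simpa [HasCompactSupport.integral_Iic_deriv_eq (f := fun y => e2pi (y * s) * f y)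
      ((contDiff_e2pi_mul s).mul hf) hfc.mul_left, norm_e2pi]
    using norm_mul_setIntegral_e2pi_mul_le hf hfc (Iic b) s

end HalfLine

section Vsgn

variable {φ : ℝ → ℂ}

lemma norm_Vsgn_le (hφ : Integrable φ) (ξ t : ℝ) : ‖Vsgn φ ξ t‖ ≤ ∫ y, ‖φ y‖ :=
  calc ‖Vsgn φ ξ t‖ ≤ ∫ y, ‖φ (y - ξ)‖ := by
        refine norm_integral_le_of_norm_le (hφ.norm.comp_sub_right ξ) (.of_forall fun y => ?_)
        rw [norm_mul, norm_mul, norm_e2pi, mul_one, norm_real, Real.norm_eq_abs]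
        exact mul_le_of_le_one_left (norm_nonneg _) (Real.abs_sign_le_one y)
    _ = ∫ y, ‖φ y‖ := integral_sub_right_eq_self (fun y => ‖φ y‖) ξ

lemma Vsgn_eq_integral_Ioi_sub_integral_Iic (hφ : Integrable φ) (ξ t : ℝ) :
    Vsgn φ ξ t =
      (∫ y in Ioi 0, e2pi (y * -t) * φ (y - ξ)) - ∫ y in Iic 0, e2pi (y * -t) * φ (y - ξ) := by
  have hg : Integrable fun y => e2pi (y * -t) * φ (y - ξ) :=
    (hφ.comp_sub_right ξ).bdd_mul (contDiff_e2pi_mul (-t)).continuous.aestronglyMeasurable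
      (.of_forall fun y => (norm_e2pi _).le)
  have hsg : Integrable fun y => ((Real.sign y : ℝ) : ℂ) * (e2pi (y * -t) * φ (y - ξ)) :=
    hg.bdd_mul (measurable_ofReal.comp Real.measurable_sign).aestronglyMeasurable
      (.of_forall fun y => by rw [norm_real, Real.norm_eq_abs]; exact Real.abs_sign_le_one y)
  have hIoi : ∫ y in Ioi 0, ((Real.sign y : ℝ) : ℂ) * (e2pi (y * -t) * φ (y - ξ)) =
      ∫ y in Ioi 0, e2pi (y * -t) * φ (y - ξ) :=
    setIntegral_congr_fun measurableSet_Ioi fun y hy => by simp [Real.sign_of_pos hy.out]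
  have hIic : ∫ y in Iic 0, ((Real.sign y : ℝ) : ℂ) * (e2pi (y * -t) * φ (y - ξ)) =
      -∫ y in Iic 0, e2pi (y * -t) * φ (y - ξ) := by
    rw [integral_Iic_eq_integral_Iio, integral_Iic_eq_integral_Iio, ← integral_neg]
    exact setIntegral_congr_fun measurableSet_Iio fun y hy => by simp [Real.sign_of_neg hy.out]
  simp only [Vsgn, ← mul_neg, mul_assoc]
  rw [← intervalIntegral.integral_Iic_add_Ioi (b := 0) hsg.integrableOn hsg.integrableOn,
    hIoi, hIic]
  ring

lemma pi_mul_abs_mul_norm_Vsgn_le (hφ : ContDiff ℝ 1 φ) (hc : HasCompactSupport φ) (ξ t : ℝ) :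
    Real.pi * |t| * ‖Vsgn φ ξ t‖ ≤ ‖φ (-ξ)‖ + ∫ y, ‖deriv φ y‖ := by
  have hφξ : ContDiff ℝ 1 fun y => φ (y - ξ) := hφ.comp (contDiff_id.sub contDiff_const)
  have hcξ : HasCompactSupport fun y => φ (y - ξ) := hc.comp_homeomorph (Homeomorph.subRight ξ)
  have hderiv : ∫ y, ‖deriv (fun y => φ (y - ξ)) y‖ = ∫ y, ‖deriv φ y‖ := by
    simp_rw [deriv_comp_sub_const]
    exact integral_sub_right_eq_self (fun y => ‖deriv φ y‖) ξ
  have hIoi := norm_mul_integral_Ioi_e2pi_mul_le hφξ hcξ 0 (-t)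
  have hIic := norm_mul_integral_Iic_e2pi_mul_le hφξ hcξ 0 (-t)
  rw [abs_neg, hderiv, zero_sub] at hIoi hIic
  rw [Vsgn_eq_integral_Ioi_sub_integral_Iic (hφ.continuous.integrable_of_hasCompactSupport hc)]
  refine (mul_le_mul_of_nonneg_left (norm_sub_le _ _) (by positivity)).trans ?_
  linarith

lemma exists_one_add_abs_mul_norm_Vsgn_le (hφ : ContDiff ℝ 1 φ) (hc : HasCompactSupport φ) :
    ∃ D, ∀ ξ t, (1 + |t|) * ‖Vsgn φ ξ t‖ ≤ D := by
  obtain ⟨K, hK⟩ := hφ.continuous.bounded_above_of_compact_support hc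
  refine ⟨(∫ y, ‖φ y‖) + (K + ∫ y, ‖deriv φ y‖) / Real.pi, fun ξ t => ?_⟩
  have hsmall := norm_Vsgn_le (hφ.continuous.integrable_of_hasCompactSupport hc) ξ t
  have hlarge : |t| * ‖Vsgn φ ξ t‖ ≤ (K + ∫ y, ‖deriv φ y‖) / Real.pi := by
    rw [le_div_iff₀ Real.pi_pos]
    linarith [pi_mul_abs_mul_norm_Vsgn_le hφ hc ξ t, hK (-ξ)]
  linarith

end Vsgn

lemma lintegral_ofReal_div_one_add_abs_rpow_lt_top {D r : ℝ} (hD : 0 ≤ D) (hr : 1 < r) :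
    ∫⁻ t : ℝ, ENNReal.ofReal (D / (1 + |t|)) ^ r < ∞ := by
  have hint : Integrable fun t : ℝ => (D / (1 + |t|)) ^ r := by
    refine ((integrable_one_add_norm (by simpa using hr)).const_mul (D ^ r)).congr
      (.of_forall fun t => ?_)
    dsimp only
    rw [Real.norm_eq_abs, Real.rpow_neg (by positivity), Real.div_rpow hD (by positivity),
      div_eq_mul_inv]
  have hrpow (t : ℝ) : ENNReal.ofReal (D / (1 + |t|)) ^ r = ENNReal.ofReal ((D / (1 + |t|)) ^ r) :=
    ENNReal.ofReal_rpow_of_nonneg (by positivity) (by linarith)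
  simpa only [hrpow] using hint.lintegral_lt_top

lemma nnnorm_le_ofReal_div_one_add_abs {z : ℂ} {t D : ℝ} (h : (1 + |t|) * ‖z‖ ≤ D) :
    (‖z‖₊ : ℝ≥0∞) ≤ ENNReal.ofReal (D / (1 + |t|)) := by
  rw [← enorm_eq_nnnorm, ← ofReal_norm]
  exact ENNReal.ofReal_le_ofReal ((le_div_iff₀ (by positivity)).2 (by linarith))

theorem stmt13_general (ψ₁ : SchwartzMap ℝ ℝ)
    (hsupp : tsupport (⇑ψ₁) ⊆ Set.Ioo 0 1)
    (ψ : ℝ → ℂ) (hψ : ψ = fun y => ((ψ₁ y - ψ₁ (-y) : ℝ) : ℂ))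
    (r : ℝ) (hr : 1 < r) :
    ∃ C : ℝ≥0∞, C < ∞ ∧
      ∀ ξ : ℝ, (∫⁻ t : ℝ, (‖Vsgn ψ ξ t‖₊ : ℝ≥0∞) ^ r) ^ (1 / r) ≤ C := by
  subst hψ
  have hψ₁ : HasCompactSupport ψ₁ :=
    isCompact_Icc.of_isClosed_subset (isClosed_tsupport _) (hsupp.trans Ioo_subset_Icc_self)
  have hsmooth : ContDiff ℝ 1 fun y => ((ψ₁ y - ψ₁ (-y) : ℝ) : ℂ) :=
    ofRealCLM.contDiff.comp ((ψ₁.smooth 1).sub ((ψ₁.smooth 1).comp contDiff_neg))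
  have hcompact : HasCompactSupport fun y => ((ψ₁ y - ψ₁ (-y) : ℝ) : ℂ) :=
    (hψ₁.sub (hψ₁.comp_homeomorph (Homeomorph.neg ℝ))).comp_left ofReal_zero
  obtain ⟨D, hD⟩ := exists_one_add_abs_mul_norm_Vsgn_le hsmooth hcompact
  have hD0 : 0 ≤ D := le_trans (by positivity) (hD 0 0)
  refine ⟨(∫⁻ t : ℝ, ENNReal.ofReal (D / (1 + |t|)) ^ r) ^ (1 / r),
    ENNReal.rpow_lt_top_of_nonneg (by positivity)
      (lintegral_ofReal_div_one_add_abs_rpow_lt_top hD0 hr).ne, fun ξ => ?_⟩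
  gcongr with t
  exact nnnorm_le_ofReal_div_one_add_abs (hD ξ t)

/-- uniform bound `sup_ξ ‖V_ψ sgn (ξ, ·)‖_{L^r} ≤ C < ∞` for every `r > 1`. -/
theorem stmt13 (ψ₁ : SchwartzMap ℝ ℝ)
    (hpos : ∀ y, 0 ≤ ψ₁ y) (hle : ∀ y, ψ₁ y ≤ 1)
    (hsupp : tsupport (⇑ψ₁) ⊆ Set.Ioo 0 1)
    (ψ : ℝ → ℂ) (hψ : ψ = fun y => ((ψ₁ y - ψ₁ (-y) : ℝ) : ℂ))
    (r : ℝ) (hr : 1 < r) :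
    ∃ C : ℝ≥0∞, C < ∞ ∧
      ∀ ξ : ℝ, (∫⁻ t : ℝ, (‖Vsgn ψ ξ t‖₊ : ℝ≥0∞) ^ r) ^ (1 / r) ≤ C :=
  stmt13_general ψ₁ hsupp ψ hψ r hr

end
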